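/- arXiv:1601.01811 — 3 statements merged into one kernel-verified Lean document; each statement's English description precedes it below -/
import Mathlib

section
/- For every t > 0 the events {β_t = 0} and {τ ≤ t} coincide up to a P-null set, i.e. P({β_t = 0} Δ {τ ≤ t}) = 0. Consequently, {τ ≤ t} ∈ 𝓕ᴾ_t for every t ≥ 0, i.e. τ is a stopping time with respect to the filtration 𝔽ᴾ = (𝓕ᴾ_t)_{t≥0}. -/
open MeasureTheory ProbabilityTheory

noncomputable section

/-- The information process: Brownian bridge between 0 and 0 on the random interval `[0, τ]`,
`β_t = W_t - (t / (τ ∨ t)) W_{τ ∨ t}`. -/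
def infoProc {Ω : Type*} (W : ℝ → Ω → ℝ) (τ : Ω → ℝ) (t : ℝ) (ω : Ω) : ℝ :=
  W t ω - (t / max (τ ω) t) * W (max (τ ω) t) ω

/-- `W` is a standard Brownian motion on `(Ω, 𝓕, P)`: it starts at `0`, has continuous paths,
independent increments, and Gaussian increments `W_t - W_s ∼ N(0, t - s)`. -/
structure IsStdBrownianMotion {Ω : Type*} [MeasurableSpace Ω] (P : Measure Ω)
    (W : ℝ → Ω → ℝ) : Prop where
  meas : ∀ t, Measurable (W t)
  init : ∀ ω, W 0 ω = 0
  cont : ∀ ω, Continuous fun t => W t ω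
  indep_incr : ∀ (n : ℕ) (t : ℕ → ℝ), Monotone t →
    iIndepFun
      (fun i : Fin n => fun ω => W (t (i + 1)) ω - W (t i) ω) P
  gauss_incr : ∀ s t : ℝ, 0 ≤ s → s ≤ t →
    Measure.map (fun ω => W t ω - W s ω) P = gaussianReal 0 (Real.toNNReal (t - s))

/-- The σ-algebra `σ(X)` generated by a real random variable `X`. -/
def sigmaGen {Ω : Type*} (X : Ω → ℝ) : MeasurableSpace Ω :=
  MeasurableSpace.comap X inferInstance

/-- The natural filtration of a process: `𝓕⁰_t = σ(β_s, 0 ≤ s ≤ t)`. -/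
def natFilt {Ω : Type*} (β : ℝ → Ω → ℝ) (t : ℝ) : MeasurableSpace Ω :=
  ⨆ s ∈ Set.Icc (0 : ℝ) t, sigmaGen (β s)

/-- The σ-algebra `𝓝_P` generated by the `P`-null sets. -/
def nullSigma {Ω : Type*} [MeasurableSpace Ω] (P : Measure Ω) : MeasurableSpace Ω :=
  MeasurableSpace.generateFrom {s : Set Ω | P s = 0}

/-- The completed natural filtration `𝓕ᴾ_t = 𝓕⁰_t ∨ 𝓝_P`. -/
def complFilt {Ω : Type*} [MeasurableSpace Ω] (P : Measure Ω) (β : ℝ → Ω → ℝ)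
    (t : ℝ) : MeasurableSpace Ω :=
  natFilt β t ⊔ nullSigma P

/-- The filtration `𝓕^β_t = 𝓕⁰_{t+} ∨ 𝓝_P`, where `𝓕⁰_{t+} = ⋂_{u > t} 𝓕⁰_u`. -/
def rightFilt {Ω : Type*} [MeasurableSpace Ω] (P : Measure Ω) (β : ℝ → Ω → ℝ)
    (t : ℝ) : MeasurableSpace Ω :=
  (⨅ u ∈ Set.Ioi t, natFilt β u) ⊔ nullSigma P

/-- The Gaussian density `p(s, x, y)` with variance `s` and mean `y`, evaluated at `x`. -/
def gaussDens (s x y : ℝ) : ℝ :=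
  (Real.sqrt (2 * Real.pi * s))⁻¹ * Real.exp (-(x - y) ^ 2 / (2 * s))

/-- For `t > 0`, the density `φ_t(r, x)` of the Brownian bridge of length `r` at time `t < r`,
and `0` for `r ≤ t`. -/
def phi (t r x : ℝ) : ℝ :=
  if t < r then gaussDens (t * (r - t) / r) x 0 else 0

/-- The a posteriori density `φ̂_t(r, x) = φ_t(r, x) / ∫_{(t,∞)} φ_t(v, x) μ(dv)` where `μ`
is the law of `τ`. -/
def phiHat (μ : Measure ℝ) (t r x : ℝ) : ℝ :=
  phi t r x / ∫ v in Set.Ioi t, phi t v x ∂μ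


/-!
On `{τ ≤ t}` the bridge has already returned to `0`, so `β_t = 0` there. On `{τ > t}` we have
`β_t = W_t - (t / τ) W_τ`; since `τ` is independent of `W`, the joint law of `τ` and `W` is a
product, so by Fubini it suffices that `W_t - (t / r) W_r = 0` is null for each fixed `r > t`.
That holds because `W_r - W_t` is independent of `W_t` and has an atomless Gaussian law. Hence
`{τ ≤ t}` differs from the `𝓕⁰_t`-event `{β_t = 0}` by a null set, which lies in `𝓝_P`.
-/

namespace ProbabilityTheory

lemma IndepFun.measure_preimage_prodMk_eq_zero {Ω β γ : Type*} {mΩ : MeasurableSpace Ω}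
    [MeasurableSpace β] [MeasurableSpace γ] {P : Measure Ω} [IsFiniteMeasure P]
    {X : Ω → β} {Y : Ω → γ} (hXY : IndepFun X Y P) (hX : Measurable X) (hY : Measurable Y)
    {S : Set (β × γ)} (hS : MeasurableSet S) (hslice : ∀ b, P (Y ⁻¹' (Prod.mk b ⁻¹' S)) = 0) :
    P ((fun ω => (X ω, Y ω)) ⁻¹' S) = 0 := by
  have hmap_slice (b : β) : P.map Y (Prod.mk b ⁻¹' S) = 0 := by
    rw [Measure.map_apply hY (measurable_prodMk_left hS), hslice]
  rw [← Measure.map_apply (hX.prodMk hY) hS,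
    (indepFun_iff_map_prod_eq_prod_map_map hX.aemeasurable hY.aemeasurable).mp hXY,
    Measure.prod_apply hS, lintegral_congr hmap_slice, lintegral_zero]

lemma IndepFun.measure_eq_comp_eq_zero {Ω α : Type*} {mΩ : MeasurableSpace Ω}
    [MeasurableSpace α] {P : Measure Ω} [IsFiniteMeasure P] {U : Ω → α} {V : Ω → ℝ}
    (hUV : IndepFun U V P) (hU : Measurable U) (hV : Measurable V)
    [NullSingletonClass (P.map V)] {f : α → ℝ} (hf : Measurable f) :
    P {ω | V ω = f (U ω)} = 0 :=
  hUV.measure_preimage_prodMk_eq_zero hU hV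
    (measurableSet_eq_fun measurable_snd (hf.comp measurable_fst))
    fun u => by
      change P (V ⁻¹' {f u}) = 0
      rw [← Measure.map_apply hV (measurableSet_singleton _), measure_singleton]

end ProbabilityTheory

namespace IsStdBrownianMotion

variable {Ω : Type*} [MeasurableSpace Ω] {P : Measure Ω} {W : ℝ → Ω → ℝ}

lemma indepFun_sub (hW : IsStdBrownianMotion P W) {t r : ℝ} (ht : 0 ≤ t) (htr : t ≤ r) :
    IndepFun (W t) (fun ω => W r ω - W t ω) P := by
  let times : ℕ → ℝ := fun n => if n = 0 then 0 else if n = 1 then t else r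
  have hmono : Monotone times := by
    refine monotone_nat_of_le_succ fun n => ?_
    rcases n with _ | _ | n <;> simp [times, ht, htr]
  simpa [times, hW.init] using (hW.indep_incr 2 times hmono).indepFun (i := 0) (j := 1) (by decide)

lemma measure_sub_div_mul_eq_zero [IsProbabilityMeasure P] (hW : IsStdBrownianMotion P W)
    {t r : ℝ} (ht : 0 < t) (htr : t < r) :
    P {ω | W t ω - t / r * W r ω = 0} = 0 := by
  have : NullSingletonClass (P.map fun ω => W r ω - W t ω) := by
    rw [hW.gauss_incr t r ht.le htr.le]
    exact nullSingletonClass_gaussianReal (Real.toNNReal_pos.mpr (sub_pos.mpr htr)).ne'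
  have hset : {ω | W t ω - t / r * W r ω = 0} =
      {ω | W r ω - W t ω = (r / t - 1) * W t ω} := by
    have : r ≠ 0 := (ht.trans htr).ne'
    ext ω
    simp only [Set.mem_ofPred_eq]
    constructor <;> intro h <;> field_simp at h ⊢ <;> linarith
  rw [hset]
  exact (hW.indepFun_sub ht.le htr.le).measure_eq_comp_eq_zero (hW.meas t)
    ((hW.meas r).sub (hW.meas t)) (measurable_const.mul measurable_id)

end IsStdBrownianMotion

/-- The `σ`-algebra `m` of the process is made the instance, so that `ℝ × Ω` carries
`borel ⊗ m` and `id : (Ω, mΩ) → (Ω, m)` stands for the whole path of `W`. -/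
lemma measure_sub_div_mul_eq_zero_at_indep_time {Ω : Type*} {mΩ : MeasurableSpace Ω}
    [m : MeasurableSpace Ω] (hm : m ≤ mΩ) {P : @Measure Ω mΩ} [IsFiniteMeasure P]
    {W : ℝ → Ω → ℝ} (hWc : ∀ ω, Continuous fun s => W s ω) (hWm : ∀ s, Measurable (W s))
    {τ : Ω → ℝ} (hτ : Measurable[mΩ] τ) (hind : IndepFun τ id P) {t : ℝ}
    (hfixed : ∀ r, t < r → P {ω | W t ω - t / r * W r ω = 0} = 0) :
    P {ω | t < τ ω ∧ W t ω - t / τ ω * W (τ ω) ω = 0} = 0 := by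
  have hS : MeasurableSet {p : ℝ × Ω | t < p.1 ∧ W t p.2 - t / p.1 * Function.uncurry W p = 0} :=
    (measurable_fst measurableSet_Ioi).inter <|
      ((hWm t).comp measurable_snd).sub ((measurable_const.div measurable_fst).mul
        (measurable_uncurry_of_continuous_of_measurable hWc hWm)) (measurableSet_singleton 0)
  refine hind.measure_preimage_prodMk_eq_zero hτ (measurable_iff_le_map.mpr hm) hS fun r => ?_
  by_cases hr : t < r
  · simpa [hr] using hfixed r hr
  · simp [hr]

lemma symmDiff_setOf_infoProc_eq_zero {Ω : Type*} (W : ℝ → Ω → ℝ) (τ : Ω → ℝ) {t : ℝ}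
    (ht : t ≠ 0) :
    symmDiff {ω | infoProc W τ t ω = 0} {ω | τ ω ≤ t} =
      {ω | t < τ ω ∧ W t ω - t / τ ω * W (τ ω) ω = 0} := by
  ext ω
  by_cases hτt : τ ω ≤ t
  · simp [Set.mem_symmDiff, infoProc, hτt, ht]
  · simp [Set.mem_symmDiff, infoProc, hτt, (not_le.mp hτt).le, not_le.mp hτt]

lemma measurable_natFilt {Ω : Type*} (β : ℝ → Ω → ℝ) {t : ℝ} (ht : 0 ≤ t) :
    Measurable[natFilt β t] (β t) :=
  measurable_iff_comap_le.mpr <| le_biSup (fun s => sigmaGen (β s)) ⟨ht, le_rfl⟩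

lemma measurableSet_sup_nullSigma_of_measure_symmDiff_eq_zero {Ω : Type*}
    {m mΩ : MeasurableSpace Ω} {P : @Measure Ω mΩ} {A B : Set Ω} (hA : MeasurableSet[m] A)
    (hAB : P (symmDiff A B) = 0) : MeasurableSet[m ⊔ nullSigma P] B := by
  have hnull : MeasurableSet[m ⊔ nullSigma P] (symmDiff A B) :=
    le_sup_right (a := m) _ (MeasurableSpace.measurableSet_generateFrom hAB)
  rw [← symmDiff_symmDiff_cancel_left A B]
  exact (le_sup_left (b := nullSigma P) _ hA).symmDiff hnull

theorem tau_stoppingTime_complFilt_general {Ω : Type*} [MeasurableSpace Ω] (P : Measure Ω)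
    [IsProbabilityMeasure P]
    (W : ℝ → Ω → ℝ) (hW : IsStdBrownianMotion P W)
    (τ : Ω → ℝ) (hτ_meas : Measurable τ) (hτ_pos : ∀ ω, 0 < τ ω)
    (hindep : Indep (sigmaGen τ) (⨆ t : ℝ, sigmaGen (W t)) P) :
    (∀ t : ℝ, 0 < t →
        P (symmDiff {ω | infoProc W τ t ω = 0} {ω | τ ω ≤ t}) = 0) ∧
      ∀ t : ℝ, 0 ≤ t →
        MeasurableSet[complFilt P (infoProc W τ) t] {ω | τ ω ≤ t} := by
  have hle : (⨆ t : ℝ, sigmaGen (W t)) ≤ ‹_› :=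
    iSup_le fun s => measurable_iff_comap_le.mp (hW.meas s)
  have hτW : @IndepFun Ω ℝ Ω _ _ (⨆ t : ℝ, sigmaGen (W t)) τ id P :=
    (IndepFun_iff_Indep (mγ := ⨆ t : ℝ, sigmaGen (W t)) τ id P).mpr <| by
      rwa [MeasurableSpace.comap_id]
  have hnull (t : ℝ) (ht : 0 < t) :
      P (symmDiff {ω | infoProc W τ t ω = 0} {ω | τ ω ≤ t}) = 0 := by
    rw [symmDiff_setOf_infoProc_eq_zero W τ ht.ne']
    exact measure_sub_div_mul_eq_zero_at_indep_time (m := ⨆ t : ℝ, sigmaGen (W t)) hle hW.cont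
      (fun s => measurable_iff_comap_le.mpr (le_iSup (fun s => sigmaGen (W s)) s)) hτ_meas
      hτW fun r => hW.measure_sub_div_mul_eq_zero ht
  refine ⟨hnull, fun t ht => ?_⟩
  rcases ht.eq_or_lt with rfl | ht
  · simp [(hτ_pos _).not_ge]
  · exact measurableSet_sup_nullSigma_of_measure_symmDiff_eq_zero
      (measurable_natFilt (infoProc W τ) ht.le (measurableSet_singleton 0)) (hnull t ht)

/-- For every `t > 0` the events `{β_t = 0}` and `{τ ≤ t}` coincide up to a `P`-null set;
consequently `{τ ≤ t} ∈ 𝓕ᴾ_t` for every `t ≥ 0`, i.e. `τ` is an `𝔽ᴾ`-stopping time. -/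
theorem tau_stoppingTime_complFilt {Ω : Type*} [MeasurableSpace Ω] (P : Measure Ω)
    [IsProbabilityMeasure P] [P.IsComplete]
    (W : ℝ → Ω → ℝ) (hW : IsStdBrownianMotion P W)
    (τ : Ω → ℝ) (hτ_meas : Measurable τ) (hτ_pos : ∀ ω, 0 < τ ω)
    (hindep : Indep (sigmaGen τ) (⨆ t : ℝ, sigmaGen (W t)) P) :
    (∀ t : ℝ, 0 < t →
        P (symmDiff {ω | infoProc W τ t ω = 0} {ω | τ ω ≤ t}) = 0) ∧
      ∀ t : ℝ, 0 ≤ t →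
        MeasurableSet[complFilt P (infoProc W τ) t] {ω | τ ω ≤ t} :=
  tau_stoppingTime_complFilt_general P W hW τ hτ_meas hτ_pos hindep
end
end

section
/- Suppose P(τ > ε) = 1 for some ε > 0 and let (t_n)_{n∈ℕ} be a strictly decreasing sequence with 0 < t_n < ε and t_n ↓ 0. Then: (a) P-almost surely there exists a finite constant K = K(ε, ω) such that φ̂_{t_n}(r, β_{t_n}(ω)) ≤ K for all n ∈ ℕ and for P_τ-almost every r; (b) for every r > 0, lim_{n→∞} φ̂_{t_n}(r, β_{t_n}) = 1 P-almost surely. -/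
open MeasureTheory ProbabilityTheory

noncomputable section

/-! Bridge densities of different lengths differ by an explicit factor:
`φ_t(v, x) = φ_t(r, x) · √((1 - t/r) / (1 - t/v)) · exp (x²/2 · (1/(r - t) - 1/(v - t)))`,
so `φ̂_t(r, x)` is the reciprocal of the `P_τ`-integral of that factor over `v`. Since `τ > ε`
almost surely, for `t ≤ t₀ < ε` and bounded `x` the factor is bounded above and away from `0`
uniformly in `v > ε`, which gives (a) for `r > ε`; and as `t, x → 0` it tends to `1`, so
dominated convergence gives (b). Both apply along every path, because `β_t(ω) → 0` as `t ↓ 0`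
by continuity of `W` and `W_0 = 0`. -/

open Filter Topology

def phiRatio (t r v x : ℝ) : ℝ :=
  Real.sqrt ((1 - t / r) / (1 - t / v)) * Real.exp (x ^ 2 / 2 * (1 / (r - t) - 1 / (v - t)))

lemma phi_pos {t r : ℝ} (ht : 0 < t) (htr : t < r) (x : ℝ) : 0 < phi t r x := by
  have : 0 < t * (r - t) / r := div_pos (mul_pos ht (sub_pos.2 htr)) (ht.trans htr)
  rw [phi, if_pos htr, gaussDens]
  positivity

lemma phi_eq_phi_mul_phiRatio {t r v : ℝ} (ht : 0 < t) (htr : t < r) (htv : t < v) (x : ℝ) :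
    phi t v x = phi t r x * phiRatio t r v x := by
  have hr : 0 < r := ht.trans htr
  have hv : 0 < v := ht.trans htv
  have hrt : 0 < r - t := sub_pos.2 htr
  have hvt : 0 < v - t := sub_pos.2 htv
  have hA : 0 < 2 * Real.pi * (t * (r - t) / r) := by positivity
  have hvar : (1 - t / r) / (1 - t / v) =
      2 * Real.pi * (t * (r - t) / r) / (2 * Real.pi * (t * (v - t) / v)) := by
    field_simp
  have hexp : -(x - 0) ^ 2 / (2 * (t * (v - t) / v)) =
      -(x - 0) ^ 2 / (2 * (t * (r - t) / r)) + x ^ 2 / 2 * (1 / (r - t) - 1 / (v - t)) := by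
    field_simp
    ring
  rw [phi, phi, if_pos htv, if_pos htr, phiRatio, gaussDens, gaussDens, hexp, Real.exp_add,
    hvar, Real.sqrt_div hA.le]
  field_simp

lemma phiHat_eq_inv_integral_phiRatio {μ : Measure ℝ} {t r : ℝ} (ht : 0 < t) (htr : t < r)
    (hμ : ∀ᵐ v ∂μ, t < v) (x : ℝ) :
    phiHat μ t r x = (∫ v, phiRatio t r v x ∂μ)⁻¹ := by
  have hfactor : ∫ v, phi t v x ∂μ = phi t r x * ∫ v, phiRatio t r v x ∂μ := by
    rw [← integral_const_mul]
    exact integral_congr_ae (hμ.mono fun v htv => phi_eq_phi_mul_phiRatio ht htr htv x)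
  rw [phiHat, Measure.restrict_eq_self_of_ae_mem (s := Set.Ioi t) hμ, hfactor,
    div_mul_cancel_left₀ (phi_pos ht htr x).ne']

section Bounds

variable {t t₀ ε r v x M : ℝ}

lemma phiRatio_le (ht : 0 ≤ t) (ht₀ : t ≤ t₀) (ht₀ε : t₀ < ε) (hεv : ε ≤ v) (ht₀r : t₀ < r)
    (hx : |x| ≤ M) :
    phiRatio t r v x ≤ Real.sqrt (1 - t₀ / ε)⁻¹ * Real.exp (M ^ 2 / 2 * (1 / (r - t₀))) := by
  have hε : 0 < ε := ht.trans_lt (ht₀.trans_lt ht₀ε)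
  have hfrac : 0 < 1 - t₀ / ε := by rw [sub_pos, div_lt_one hε]; exact ht₀ε
  have hv : t / v ≤ t₀ / ε := by gcongr; linarith
  have hr : 0 ≤ t / r := div_nonneg ht (by linarith)
  have hx2 : x ^ 2 ≤ M ^ 2 := sq_le_sq' (abs_le.1 hx).1 (abs_le.1 hx).2
  unfold phiRatio
  gcongr Real.sqrt ?_ * Real.exp ?_
  · calc (1 - t / r) / (1 - t / v) ≤ 1 / (1 - t₀ / ε) := by gcongr; linarith
      _ = (1 - t₀ / ε)⁻¹ := one_div _
  · calc x ^ 2 / 2 * (1 / (r - t) - 1 / (v - t)) ≤ x ^ 2 / 2 * (1 / (r - t)) := by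
          gcongr
          have : 0 < v - t := by linarith
          linarith [one_div_pos.2 this]
      _ ≤ M ^ 2 / 2 * (1 / (r - t₀)) := by
          have : 0 < 1 / (r - t) := one_div_pos.2 (by linarith)
          gcongr

lemma le_phiRatio (ht : 0 ≤ t) (ht₀ : t ≤ t₀) (ht₀ε : t₀ < ε) (hεr : ε ≤ r) (hεv : ε ≤ v)
    (hx : |x| ≤ M) :
    Real.sqrt (1 - t₀ / ε) * Real.exp (-(M ^ 2 / 2 * (1 / (ε - t₀)))) ≤ phiRatio t r v x := by
  have hε : 0 < ε := ht.trans_lt (ht₀.trans_lt ht₀ε)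
  have hv : 0 < 1 - t / v := by rw [sub_pos, div_lt_one (by linarith)]; linarith
  have hx2 : x ^ 2 ≤ M ^ 2 := sq_le_sq' (abs_le.1 hx).1 (abs_le.1 hx).2
  unfold phiRatio
  gcongr Real.sqrt ?_ * Real.exp ?_
  · calc 1 - t₀ / ε ≤ (1 - t / r) / 1 := by rw [div_one]; gcongr; linarith
      _ ≤ (1 - t / r) / (1 - t / v) := by
          gcongr
          · rw [sub_nonneg, div_le_one (by linarith)]; linarith
          · linarith [div_nonneg ht (hε.le.trans hεv)]
  · calc -(M ^ 2 / 2 * (1 / (ε - t₀))) ≤ -(x ^ 2 / 2 * (1 / (v - t))) := by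
          have : 0 < 1 / (v - t) := one_div_pos.2 (by linarith)
          gcongr
      _ ≤ x ^ 2 / 2 * (1 / (r - t) - 1 / (v - t)) := by
          have : 0 < r - t := by linarith
          nlinarith [one_div_pos.2 this, sq_nonneg x]

end Bounds

lemma tendsto_phiRatio {r v : ℝ} (hr : r ≠ 0) (hv : v ≠ 0) {l : Filter ℕ} {t x : ℕ → ℝ}
    (ht : Tendsto t l (𝓝 0)) (hx : Tendsto x l (𝓝 0)) :
    Tendsto (fun n => phiRatio (t n) r v (x n)) l (𝓝 1) := by
  have hcont : ContinuousAt (fun p : ℝ × ℝ => phiRatio p.1 r v p.2) (0, 0) := by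
    unfold phiRatio
    fun_prop (disch := simp [hr, hv])
  simpa [phiRatio, Function.comp_def] using hcont.tendsto.comp (ht.prodMk_nhds hx)

lemma measurable_phiRatio (t r x : ℝ) : Measurable fun v => phiRatio t r v x := by
  unfold phiRatio
  fun_prop

section Posterior

variable {μ : Measure ℝ} [IsProbabilityMeasure μ] {ε : ℝ}

lemma phiHat_le {t t₀ r x M : ℝ} (hμ : ∀ᵐ v ∂μ, ε < v) (ht : 0 < t) (ht₀ : t ≤ t₀)
    (ht₀ε : t₀ < ε) (hεr : ε ≤ r) (hx : |x| ≤ M) :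
    phiHat μ t r x ≤ (Real.sqrt (1 - t₀ / ε) * Real.exp (-(M ^ 2 / 2 * (1 / (ε - t₀)))))⁻¹ := by
  have hε : 0 < ε := ht.trans_le ht₀ |>.trans ht₀ε
  have hc : 0 < Real.sqrt (1 - t₀ / ε) * Real.exp (-(M ^ 2 / 2 * (1 / (ε - t₀)))) :=
    mul_pos (Real.sqrt_pos.2 (by rw [sub_pos, div_lt_one hε]; exact ht₀ε)) (Real.exp_pos _)
  have hint : Integrable (fun v => phiRatio t r v x) μ := by
    refine .of_bound (measurable_phiRatio t r x).aestronglyMeasurable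
      (Real.sqrt (1 - t₀ / ε)⁻¹ * Real.exp (M ^ 2 / 2 * (1 / (r - t₀)))) (hμ.mono fun v hv => ?_)
    rw [Real.norm_of_nonneg (by unfold phiRatio; positivity)]
    exact phiRatio_le ht.le ht₀ ht₀ε hv.le (ht₀ε.trans_le hεr) hx
  have hlower := integral_mono_ae (integrable_const _) hint
    (hμ.mono fun v hv => le_phiRatio ht.le ht₀ ht₀ε hεr hv.le hx)
  rw [integral_const, probReal_univ, one_smul] at hlower
  rw [phiHat_eq_inv_integral_phiRatio ht (by linarith)
    (hμ.mono fun v hv => by linarith) x]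
  exact inv_anti₀ hc hlower

lemma tendsto_phiHat {r : ℝ} (hε : 0 < ε) (hμ : ∀ᵐ v ∂μ, ε < v) (hr : 0 < r) {t x : ℕ → ℝ}
    (ht_pos : ∀ n, 0 < t n) (ht : Tendsto t atTop (𝓝 0)) (hx : Tendsto x atTop (𝓝 0)) :
    Tendsto (fun n => phiHat μ (t n) r (x n)) atTop (𝓝 1) := by
  obtain ⟨M, hM⟩ := hx.abs.bddAbove_range
  obtain ⟨t₀, ht₀, ht₀min⟩ := exists_between (lt_min hε hr)
  have ht₀ε : t₀ < ε := ht₀min.trans_le (min_le_left ε r)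
  have ht₀r : t₀ < r := ht₀min.trans_le (min_le_right ε r)
  have hsmall : ∀ᶠ n in atTop, t n ≤ t₀ := ht.eventually_le_const ht₀
  have hintegral : Tendsto (fun n => ∫ v, phiRatio (t n) r v (x n) ∂μ) atTop (𝓝 1) := by
    have hdom := tendsto_integral_filter_of_dominated_convergence
      (fun _ => Real.sqrt (1 - t₀ / ε)⁻¹ * Real.exp (M ^ 2 / 2 * (1 / (r - t₀))))
      (.of_forall fun n => (measurable_phiRatio (t n) r (x n)).aestronglyMeasurable)
      (hsmall.mono fun n hn => hμ.mono fun v hv => by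
        rw [Real.norm_of_nonneg (by unfold phiRatio; positivity)]
        exact phiRatio_le (ht_pos n).le hn ht₀ε hv.le ht₀r (hM ⟨n, rfl⟩))
      (integrable_const _)
      (hμ.mono fun v hv => tendsto_phiRatio hr.ne' (hε.trans hv).ne' ht hx)
    simpa using hdom
  have hinv := hintegral.inv₀ one_ne_zero
  rw [inv_one] at hinv
  refine hinv.congr' ?_
  filter_upwards [hsmall] with n hn
  exact (phiHat_eq_inv_integral_phiRatio (ht_pos n) (by linarith)
    (hμ.mono fun v hv => by linarith) (x n)).symm

end Posterior

lemma tendsto_infoProc_zero {Ω : Type*} {W : ℝ → Ω → ℝ} {τ : Ω → ℝ} {ω : Ω}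
    (hW : Continuous fun t => W t ω) (hW₀ : W 0 ω = 0) (hτ : 0 < τ ω) :
    Tendsto (fun t => infoProc W τ t ω) (𝓝 0) (𝓝 0) := by
  have hcont : ContinuousAt (fun t => infoProc W τ t ω) 0 := by
    have hmax : max (τ ω) 0 ≠ 0 := (lt_max_of_lt_left hτ).ne'
    unfold infoProc
    fun_prop (disch := exact hmax)
  simpa [infoProc, hW₀] using hcont.tendsto

theorem phiHat_bounded_and_tendsto_one_general {Ω : Type*} [MeasurableSpace Ω] (P : Measure Ω)
    [IsProbabilityMeasure P]
    (W : ℝ → Ω → ℝ) (hW : IsStdBrownianMotion P W)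
    (τ : Ω → ℝ) (hτ_meas : Measurable τ) (hτ_pos : ∀ ω, 0 < τ ω)
    (ε : ℝ) (hε : 0 < ε) (hτε : P {ω | ε < τ ω} = 1)
    (ts : ℕ → ℝ) (hts_anti : StrictAnti ts) (hts_mem : ∀ n, 0 < ts n ∧ ts n < ε)
    (hts_lim : Filter.Tendsto ts Filter.atTop (nhds 0)) :
    (∀ᵐ ω ∂P, ∃ K : ℝ, ∀ᵐ r ∂(P.map τ), ∀ n : ℕ,
        phiHat (P.map τ) (ts n) r (infoProc W τ (ts n) ω) ≤ K) ∧
      ∀ r : ℝ, 0 < r → ∀ᵐ ω ∂P,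
        Filter.Tendsto (fun n => phiHat (P.map τ) (ts n) r (infoProc W τ (ts n) ω))
          Filter.atTop (nhds 1) := by
  have := Measure.isProbabilityMeasure_map (μ := P) hτ_meas.aemeasurable
  have hμ : ∀ᵐ v ∂P.map τ, ε < v := by
    rw [ae_map_iff hτ_meas.aemeasurable measurableSet_Ioi,
      ae_iff_measure_eq (p := fun ω => ε < τ ω) (hτ_meas measurableSet_Ioi).nullMeasurableSet,
      measure_univ]
    exact hτε
  have hβ (ω : Ω) : Tendsto (fun n => infoProc W τ (ts n) ω) atTop (𝓝 0) :=
    (tendsto_infoProc_zero (hW.cont ω) (hW.init ω) (hτ_pos ω)).comp hts_lim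
  refine ⟨.of_forall fun ω => ?_, fun r hr => .of_forall fun ω =>
    tendsto_phiHat hε hμ hr (fun n => (hts_mem n).1) hts_lim (hβ ω)⟩
  obtain ⟨M, hM⟩ := (hβ ω).abs.bddAbove_range
  exact ⟨_, hμ.mono fun r hr n => phiHat_le hμ (hts_mem n).1
    (hts_anti.antitone (Nat.zero_le n)) (hts_mem 0).2 hr.le (hM ⟨n, rfl⟩)⟩

/-- Suppose `P(τ > ε) = 1` and `t_n ↓ 0` with `0 < t_n < ε`. Then (a) `P`-a.s. the family
`φ̂_{t_n}(r, β_{t_n})` is uniformly bounded by a finite constant `K(ε, ω)` for all `n` and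
`P_τ`-a.e. `r`, and (b) for every `r > 0`, `φ̂_{t_n}(r, β_{t_n}) → 1` `P`-a.s. -/
theorem phiHat_bounded_and_tendsto_one {Ω : Type*} [MeasurableSpace Ω] (P : Measure Ω)
    [IsProbabilityMeasure P] [P.IsComplete]
    (W : ℝ → Ω → ℝ) (hW : IsStdBrownianMotion P W)
    (τ : Ω → ℝ) (hτ_meas : Measurable τ) (hτ_pos : ∀ ω, 0 < τ ω)
    (hindep : Indep (sigmaGen τ) (⨆ t : ℝ, sigmaGen (W t)) P)
    (ε : ℝ) (hε : 0 < ε) (hτε : P {ω | ε < τ ω} = 1)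
    (ts : ℕ → ℝ) (hts_anti : StrictAnti ts) (hts_mem : ∀ n, 0 < ts n ∧ ts n < ε)
    (hts_lim : Filter.Tendsto ts Filter.atTop (nhds 0)) :
    (∀ᵐ ω ∂P, ∃ K : ℝ, ∀ᵐ r ∂(P.map τ), ∀ n : ℕ,
        phiHat (P.map τ) (ts n) r (infoProc W τ (ts n) ω) ≤ K) ∧
      ∀ r : ℝ, 0 < r → ∀ᵐ ω ∂P,
        Filter.Tendsto (fun n => phiHat (P.map τ) (ts n) r (infoProc W τ (ts n) ω))
          Filter.atTop (nhds 1) :=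
  phiHat_bounded_and_tendsto_one_general P W hW τ hτ_meas hτ_pos ε hε hτε ts hts_anti hts_mem
    hts_lim
end
end

section
/- For the process Z defined by Z_t := (β_t/(τ − t))·1_{{t < τ}}, one has E[∫_0^t |Z_s| ds] < ∞ for every t ≥ 0. -/
/-!
On `{s < τ}` one has `Z_s = W_s / τ - (s / τ) (W_τ - W_s) / (τ - s)`, hence
`|Z_s| ≤ |W_s| / s + |W_τ - W_s| / (τ - s)`. A centred Gaussian satisfies `E|X| ≤ √(Var X)`,
so `E|W_b - W_a| ≤ √(b - a)`; as `τ` is independent of `W`, conditioning on `τ = r` bounds the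
expectation of the second term by `E[(τ - s)^(-1/2); s < τ]`. Finally both `s ↦ s^(-1/2)` and
`s ↦ (r - s)^(-1/2) 1_{s < r}` integrate over `(0, t]` to at most `2√t`, so
`E ∫₀ᵗ |Z_s| ds ≤ 4√t`.
-/

open MeasureTheory ProbabilityTheory

noncomputable section

open Set
open scoped ENNReal NNReal

lemma abs_sub_div_mul_div_le {x y s r : ℝ} (hs : 0 < s) (hsr : s < r) :
    |(x - s / r * y) / (r - s)| ≤ |x| / s + |y - x| / (r - s) := by
  have hr : 0 < r := hs.trans hsr
  have hrs : 0 < r - s := sub_pos.2 hsr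
  have hsplit : (x - s / r * y) / (r - s) = x / r - s / r * ((y - x) / (r - s)) := by
    field_simp
    ring
  rw [hsplit]
  calc |x / r - s / r * ((y - x) / (r - s))|
      ≤ |x / r| + |s / r * ((y - x) / (r - s))| := abs_sub _ _
    _ = |x| / r + s / r * (|y - x| / (r - s)) := by
      rw [abs_div, abs_of_pos hr, abs_mul, abs_of_pos (div_pos hs hr), abs_div, abs_of_pos hrs]
    _ ≤ |x| / s + 1 * (|y - x| / (r - s)) := by
      gcongr
      exact div_le_one_of_le₀ hsr.le hr.le
    _ = |x| / s + |y - x| / (r - s) := by rw [one_mul]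

lemma integral_abs_gaussianReal_le (v : ℝ≥0) : ∫ x, |x| ∂gaussianReal 0 v ≤ √v := by
  have hL2 : MemLp (fun x : ℝ => |x|) 2 (gaussianReal 0 v) := (memLp_id_gaussianReal 2).abs
  have hsq : ∫ x, |x| ^ 2 ∂gaussianReal 0 v = v := by
    simp_rw [sq_abs]
    rw [← variance_of_integral_eq_zero aemeasurable_id' integral_id_gaussianReal,
      variance_fun_id_gaussianReal]
  have hvar := variance_nonneg (fun x : ℝ => |x|) (gaussianReal 0 v)
  rw [variance_eq_sub hL2, Pi.pow_def, hsq, sub_nonneg] at hvar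
  exact Real.le_sqrt_of_sq_le hvar

lemma lintegral_ofReal_abs_gaussianReal_le (v : ℝ≥0) :
    ∫⁻ x, ENNReal.ofReal |x| ∂gaussianReal 0 v ≤ ENNReal.ofReal √v := by
  have hint : Integrable (fun x : ℝ => |x|) (gaussianReal 0 v) :=
    ((memLp_id_gaussianReal 1).integrable le_rfl).abs
  rw [← ofReal_integral_eq_lintegral_ofReal hint (ae_of_all _ fun x => abs_nonneg x)]
  exact ENNReal.ofReal_le_ofReal (integral_abs_gaussianReal_le v)

lemma lintegral_Ioc_inv_sqrt {a b : ℝ} (ha : 0 ≤ a) (hab : a ≤ b) :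
    ∫⁻ u in Ioc a b, ENNReal.ofReal (1 / √u) = ENNReal.ofReal (2 * √b - 2 * √a) := by
  have hpos : ∀ u ∈ Ioc a b, 0 < u := fun u hu => ha.trans_lt hu.1
  have hrpow : ∀ u ∈ Ioc a b, ENNReal.ofReal (1 / √u) = ENNReal.ofReal (u ^ (-(1 / 2) : ℝ)) :=
    fun u hu => by rw [Real.rpow_neg (hpos u hu).le, ← Real.sqrt_eq_rpow, one_div]
  rw [setLIntegral_congr_fun measurableSet_Ioc hrpow, ← ofReal_integral_eq_lintegral_ofReal
    (intervalIntegral.intervalIntegrable_rpow' (by norm_num)).1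
    ((ae_restrict_iff' measurableSet_Ioc).2
      (ae_of_all _ fun u hu => Real.rpow_nonneg (hpos u hu).le _)),
    ← intervalIntegral.integral_of_le hab, integral_rpow (Or.inl (by norm_num)),
    show (-(1 / 2) : ℝ) + 1 = 1 / 2 by norm_num, ← Real.sqrt_eq_rpow, ← Real.sqrt_eq_rpow]
  congr 1
  ring

lemma sqrt_le_sqrt_add_sqrt_sub {a b : ℝ} (ha : 0 ≤ a) (hab : a ≤ b) : √b ≤ √a + √(b - a) := by
  rw [Real.sqrt_le_iff]
  refine ⟨by positivity, ?_⟩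
  nlinarith [Real.sq_sqrt ha, Real.sq_sqrt (sub_nonneg.2 hab), Real.sqrt_nonneg a,
    Real.sqrt_nonneg (b - a)]

lemma lintegral_Ioc_inv_sqrt_le (a b : ℝ) :
    ∫⁻ u in Ioc a b, ENNReal.ofReal (1 / √u) ≤ ENNReal.ofReal (2 * √(b - a)) := by
  have hsupp : (Ioi 0).indicator (fun u : ℝ => ENNReal.ofReal (1 / √u)) =
      fun u => ENNReal.ofReal (1 / √u) := by
    refine indicator_eq_self.2 fun u hu => ?_
    by_contra hu0
    exact hu (by simp [Real.sqrt_eq_zero'.2 (not_lt.1 hu0)])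
  rw [← hsupp, setLIntegral_indicator measurableSet_Ioi, inter_comm, Ioc_inter_Ioi]
  rcases le_or_gt b (a ⊔ 0) with hb | hb
  · simp [Ioc_eq_empty_of_le hb]
  rw [lintegral_Ioc_inv_sqrt le_sup_right hb.le]
  apply ENNReal.ofReal_le_ofReal
  have hsub := sqrt_le_sqrt_add_sqrt_sub (le_sup_right : (0 : ℝ) ≤ a ⊔ 0) hb.le
  have hmono : √(b - a ⊔ 0) ≤ √(b - a) := Real.sqrt_le_sqrt (sub_le_sub_left le_sup_left b)
  linarith

lemma lintegral_Ioc_inv_sqrt_sub_le (r t : ℝ) :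
    ∫⁻ s in Ioc 0 t, ENNReal.ofReal (1 / √(r - s)) ≤ ENNReal.ofReal (2 * √t) := by
  have hsub := (Measure.measurePreserving_sub_left volume r).setLIntegral_comp_preimage
    (measurableSet_Ico (a := r - t) (b := r)) (f := fun u => ENNReal.ofReal (1 / √u))
    (by fun_prop)
  rw [preimage_const_sub_Ico, sub_self, sub_sub_cancel] at hsub
  rw [hsub, Measure.restrict_congr_set Ico_ae_eq_Ioc]
  simpa using lintegral_Ioc_inv_sqrt_le (r - t) r

lemma ProbabilityTheory.IndepFun.lintegral_comp_eq_lintegral_map {Ω α β : Type*} [MeasurableSpace Ω]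
    [MeasurableSpace α] [MeasurableSpace β] {P : Measure Ω} [IsFiniteMeasure P]
    {X : Ω → α} {Y : Ω → β} (hX : Measurable X) (hY : Measurable Y) (hXY : IndepFun X Y P)
    {g : α × β → ℝ≥0∞} (hg : Measurable g) :
    ∫⁻ ω, g (X ω, Y ω) ∂P = ∫⁻ x, ∫⁻ ω, g (x, Y ω) ∂P ∂(P.map X) := by
  rw [← lintegral_map hg (hX.prodMk hY),
    (indepFun_iff_map_prod_eq_prod_map_map hX.aemeasurable hY.aemeasurable).1 hXY,
    lintegral_prod _ hg.aemeasurable]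
  exact lintegral_congr fun x => lintegral_map (hg.comp measurable_prodMk_left) hY

def zProc {Ω : Type*} (W : ℝ → Ω → ℝ) (τ : Ω → ℝ) (s : ℝ) (ω : Ω) : ℝ :=
  if s < τ ω then infoProc W τ s ω / (τ ω - s) else 0

lemma ofReal_abs_zProc_le {Ω : Type*} (W : ℝ → Ω → ℝ) (τ : Ω → ℝ) {s : ℝ} (hs : 0 < s)
    (ω : Ω) :
    ENNReal.ofReal |zProc W τ s ω| ≤
      ENNReal.ofReal (|W s ω| / s) + ENNReal.ofReal (|W (τ ω) ω - W s ω| / (τ ω - s)) := by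
  unfold zProc
  split_ifs with hsτ
  · rw [infoProc, max_eq_left hsτ.le, ← ENNReal.ofReal_add (by positivity) (by positivity)]
    exact ENNReal.ofReal_le_ofReal (abs_sub_div_mul_div_le hs hsτ)
  · simp

lemma measurable_zProc {Ω : Type*} [MeasurableSpace Ω] {W : ℝ → Ω → ℝ} {τ : Ω → ℝ}
    (hW : Measurable (Function.uncurry W)) (hτ : Measurable τ) :
    Measurable fun p : Ω × ℝ => zProc W τ p.2 p.1 := by
  have hWs : Measurable fun p : Ω × ℝ => W p.2 p.1 := hW.comp (measurable_snd.prodMk measurable_fst)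
  have hWτ : Measurable fun p : Ω × ℝ => W (max (τ p.1) p.2) p.1 :=
    hW.comp (((hτ.comp measurable_fst).max measurable_snd).prodMk measurable_fst)
  unfold zProc infoProc
  exact Measurable.ite (measurableSet_lt measurable_snd (hτ.comp measurable_fst)) (by fun_prop)
    measurable_const

lemma measurable_ofReal_abs_sub_div {Ω : Type*} [mΩ : MeasurableSpace Ω] {W : ℝ → Ω → ℝ}
    (hW : Measurable (Function.uncurry W)) (s : ℝ) :
    Measurable fun p : ℝ × Ω => ENNReal.ofReal (|W p.1 p.2 - W s p.2| / (p.1 - s)) := by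
  have hWp : Measurable fun p : ℝ × Ω => W p.1 p.2 := hW
  have hWs : Measurable fun p : ℝ × Ω => W s p.2 := hW.comp (measurable_const.prodMk measurable_snd)
  fun_prop

namespace IsStdBrownianMotion

variable {Ω : Type*} [MeasurableSpace Ω] {P : Measure Ω} {W : ℝ → Ω → ℝ}

lemma measurable_uncurry (hW : IsStdBrownianMotion P W) : Measurable (Function.uncurry W) :=
  measurable_uncurry_of_continuous_of_measurable hW.cont hW.meas

/-- For `b ≤ a` the integrand is `ofReal` of a nonpositive number, so the left side is `0`;
this is why the bounds below need no indicator of `{s < τ}`. -/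
lemma lintegral_abs_sub_div_le (hW : IsStdBrownianMotion P W) {a : ℝ} (ha : 0 ≤ a) (b : ℝ) :
    ∫⁻ ω, ENNReal.ofReal (|W b ω - W a ω| / (b - a)) ∂P ≤ ENNReal.ofReal (1 / √(b - a)) := by
  rcases le_or_gt b a with hba | hab
  · simp [ENNReal.ofReal_of_nonpos (div_nonpos_of_nonneg_of_nonpos (abs_nonneg _)
      (sub_nonpos.2 hba))]
  have hmeas : Measurable fun ω => W b ω - W a ω := (hW.meas b).sub (hW.meas a)
  calc ∫⁻ ω, ENNReal.ofReal (|W b ω - W a ω| / (b - a)) ∂P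
      = (∫⁻ x, ENNReal.ofReal |x| ∂P.map fun ω => W b ω - W a ω) * ENNReal.ofReal (b - a)⁻¹ := by
        rw [lintegral_map (by fun_prop) hmeas, ← lintegral_mul_const _ (by fun_prop)]
        simp_rw [div_eq_mul_inv, ENNReal.ofReal_mul (abs_nonneg _)]
    _ ≤ ENNReal.ofReal √(b - a) * ENNReal.ofReal (b - a)⁻¹ := by
        rw [hW.gauss_incr a b ha hab.le]
        gcongr
        simpa [Real.coe_toNNReal _ (sub_nonneg.2 hab.le)] using
          lintegral_ofReal_abs_gaussianReal_le (b - a).toNNReal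
    _ = ENNReal.ofReal (1 / √(b - a)) := by
        rw [← ENNReal.ofReal_mul (Real.sqrt_nonneg _), ← div_eq_mul_inv, Real.sqrt_div_self']

lemma lintegral_ofReal_abs_zProc_le [IsFiniteMeasure P] (hW : IsStdBrownianMotion P W)
    {τ : Ω → ℝ} (hτ : Measurable τ) (hindep : Indep (sigmaGen τ) (⨆ u, sigmaGen (W u)) P)
    {s : ℝ} (hs : 0 < s) :
    ∫⁻ ω, ENNReal.ofReal |zProc W τ s ω| ∂P ≤
      ENNReal.ofReal (1 / √s) + ∫⁻ r, ENNReal.ofReal (1 / √(r - s)) ∂P.map τ := by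
  have hmW : (⨆ u, sigmaGen (W u)) ≤ ‹MeasurableSpace Ω› :=
    iSup_le fun u => (hW.meas u).comap_le
  have hWmW : Measurable[@Prod.instMeasurableSpace ℝ Ω _ (⨆ u, sigmaGen (W u))]
      (Function.uncurry W) :=
    measurable_uncurry_of_continuous_of_measurable (m := ⨆ u, sigmaGen (W u)) hW.cont fun u =>
      Measurable.of_comap_le (le_iSup (fun v => sigmaGen (W v)) u)
  have hτW : @IndepFun Ω ℝ Ω _ _ (⨆ u, sigmaGen (W u)) τ id P := by
    change Indep (sigmaGen τ) (MeasurableSpace.comap id (⨆ u, sigmaGen (W u))) P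
    rwa [MeasurableSpace.comap_id]
  have hincr : ∫⁻ ω, ENNReal.ofReal (|W (τ ω) ω - W s ω| / (τ ω - s)) ∂P =
      ∫⁻ r, ∫⁻ ω, ENNReal.ofReal (|W r ω - W s ω| / (r - s)) ∂P ∂P.map τ :=
    @IndepFun.lintegral_comp_eq_lintegral_map Ω ℝ Ω _ _ (⨆ u, sigmaGen (W u)) P _ τ id hτ
      (measurable_id'' hmW) hτW (fun p => ENNReal.ofReal (|W p.1 p.2 - W s p.2| / (p.1 - s)))
      (measurable_ofReal_abs_sub_div (mΩ := ⨆ u, sigmaGen (W u)) hWmW s)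
  calc ∫⁻ ω, ENNReal.ofReal |zProc W τ s ω| ∂P
      ≤ ∫⁻ ω, (ENNReal.ofReal (|W s ω| / s) +
          ENNReal.ofReal (|W (τ ω) ω - W s ω| / (τ ω - s))) ∂P :=
        lintegral_mono (ofReal_abs_zProc_le W τ hs)
    _ = ∫⁻ ω, ENNReal.ofReal (|W s ω| / s) ∂P +
          ∫⁻ ω, ENNReal.ofReal (|W (τ ω) ω - W s ω| / (τ ω - s)) ∂P :=
        lintegral_add_left (by have := hW.meas s; fun_prop) _
    _ ≤ ENNReal.ofReal (1 / √s) + ∫⁻ r, ENNReal.ofReal (1 / √(r - s)) ∂P.map τ := by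
        rw [hincr]
        gcongr with r
        · simpa [hW.init] using hW.lintegral_abs_sub_div_le le_rfl s
        · exact hW.lintegral_abs_sub_div_le hs.le r

end IsStdBrownianMotion

theorem Z_expected_integral_finite_general {Ω : Type*} [MeasurableSpace Ω] (P : Measure Ω)
    [IsProbabilityMeasure P]
    (W : ℝ → Ω → ℝ) (hW : IsStdBrownianMotion P W)
    (τ : Ω → ℝ) (hτ_meas : Measurable τ)
    (hindep : Indep (sigmaGen τ) (⨆ t : ℝ, sigmaGen (W t)) P)
    (t : ℝ) :
    (∫⁻ ω, ∫⁻ s in Set.Ioc (0 : ℝ) t,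
        ENNReal.ofReal
          |if s < τ ω then infoProc W τ s ω / (τ ω - s) else 0| ∂volume ∂P) < ⊤ := by
  have hZ : Measurable fun p : Ω × ℝ => ENNReal.ofReal |zProc W τ p.2 p.1| :=
    (measurable_zProc hW.measurable_uncurry hτ_meas).abs.ennreal_ofReal
  calc ∫⁻ ω, ∫⁻ s in Ioc 0 t, ENNReal.ofReal |zProc W τ s ω| ∂volume ∂P
      = ∫⁻ s in Ioc 0 t, ∫⁻ ω, ENNReal.ofReal |zProc W τ s ω| ∂P :=
        lintegral_lintegral_swap hZ.aemeasurable
    _ ≤ ∫⁻ s in Ioc 0 t,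
          (ENNReal.ofReal (1 / √s) + ∫⁻ r, ENNReal.ofReal (1 / √(r - s)) ∂P.map τ) :=
        setLIntegral_mono' measurableSet_Ioc fun s hs =>
          hW.lintegral_ofReal_abs_zProc_le hτ_meas hindep hs.1
    _ = (∫⁻ s in Ioc 0 t, ENNReal.ofReal (1 / √s)) +
          ∫⁻ r, ∫⁻ s in Ioc 0 t, ENNReal.ofReal (1 / √(r - s)) ∂volume ∂P.map τ := by
        rw [lintegral_add_left (by fun_prop), lintegral_lintegral_swap (by fun_prop)]
    _ ≤ ENNReal.ofReal (2 * √t) + ∫⁻ _, ENNReal.ofReal (2 * √t) ∂P.map τ := by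
        gcongr with r
        · simpa using lintegral_Ioc_inv_sqrt_le 0 t
        · exact lintegral_Ioc_inv_sqrt_sub_le r t
    _ < ⊤ := by simp [lintegral_const, ENNReal.mul_lt_top]

/-- For the process `Z_t = (β_t / (τ - t))·1_{t < τ}`, one has `E[∫₀ᵗ |Z_s| ds] < ∞`
for every `t ≥ 0`. -/
theorem Z_expected_integral_finite {Ω : Type*} [MeasurableSpace Ω] (P : Measure Ω)
    [IsProbabilityMeasure P] [P.IsComplete]
    (W : ℝ → Ω → ℝ) (hW : IsStdBrownianMotion P W)
    (τ : Ω → ℝ) (hτ_meas : Measurable τ) (hτ_pos : ∀ ω, 0 < τ ω)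
    (hindep : Indep (sigmaGen τ) (⨆ t : ℝ, sigmaGen (W t)) P)
    (t : ℝ) (ht : 0 ≤ t) :
    (∫⁻ ω, ∫⁻ s in Set.Ioc (0 : ℝ) t,
        ENNReal.ofReal
          |if s < τ ω then infoProc W τ s ω / (τ ω - s) else 0| ∂volume ∂P) < ⊤ :=
  Z_expected_integral_finite_general P W hW τ hτ_meas hindep t
end
end
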